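/- arXiv:1611.10218 — 6 statements merged into one kernel-verified Lean document; each statement's English description precedes it below -/
import Mathlib

section
/- Let α, β, γ, δ ∈ ℂ satisfy |α|² + |β|² + |γ|² + |δ|² = 1 and α·δ = β·γ. In the space of 2×2 complex matrices equipped with the ℓ²→ℓ² operator norm, set u = !![1,0;0,0] and v = !![α,β;γ,δ]. Then ‖u − v‖² = (1 − Re α) + √( (1 − Re α)² − |δ|² ). -/
/-!
If `T : 𝕜² → E` sends the standard basis to `u, v`, then `‖T x‖²` is the Hermitian form of the
Gram matrix `[[p, m], [conj m, q]]` with `p = ‖u‖²`, `q = ‖v‖²`, `m = ⟪u, v⟫`, so `‖T‖²` is its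
larger eigenvalue `t = (p + q + √((p + q)² - 4 (p q - ‖m‖²))) / 2`: the bound `‖T x‖² ≤ t ‖x‖²` is
positive semidefiniteness of `t - Gram`, and an eigenvector attains it. For a `2 × 2` matrix,
`p + q` is the squared Frobenius norm and `p q - ‖m‖² = ‖det‖²` by Lagrange's identity. For
`!![1, 0; 0, 0] - !![α, β; γ, δ]` the normalisation makes the first equal to `2 (1 - Re α)` and
`α δ = β γ` makes the determinant `-δ`.
-/

open RCLike ComplexConjugate
open scoped InnerProductSpace

theorem ContinuousLinearMap.sq_opNorm_eq_of_le_of_eq {𝕜 E F : Type*} [NontriviallyNormedField 𝕜]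
    [NormedAddCommGroup E] [NormedSpace 𝕜 E] [NormedAddCommGroup F] [NormedSpace 𝕜 F]
    (T : E →L[𝕜] F) {t : ℝ} (hle : ∀ x, ‖T x‖ ^ 2 ≤ t * ‖x‖ ^ 2) {x₀ : E} (hx₀ : x₀ ≠ 0)
    (heq : ‖T x₀‖ ^ 2 = t * ‖x₀‖ ^ 2) :
    ‖T‖ ^ 2 = t := by
  have hx₀ : 0 < ‖x₀‖ ^ 2 := by positivity
  have ht : 0 ≤ t := nonneg_of_mul_nonneg_left (heq ▸ sq_nonneg _) hx₀
  have hT : ‖T‖ ≤ √t := T.opNorm_le_bound (Real.sqrt_nonneg t) fun x => by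
    rw [← Real.sqrt_sq (norm_nonneg (T x)), ← Real.sqrt_sq (norm_nonneg x), ← Real.sqrt_mul ht]
    exact Real.sqrt_le_sqrt (hle x)
  refine le_antisymm ((Real.le_sqrt (norm_nonneg _) ht).1 hT) ?_
  have h := pow_le_pow_left₀ (norm_nonneg _) (T.le_opNorm x₀) 2
  rw [heq, mul_pow] at h
  exact le_of_mul_le_mul_right h hx₀

theorem two_mul_mul_le_of_mul_eq_sq {a b c : ℝ} (ha : 0 ≤ a) (hb : 0 ≤ b) (h : a * b = c ^ 2)
    (X Y : ℝ) : 2 * c * X * Y ≤ a * X ^ 2 + b * Y ^ 2 := by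
  rcases ha.eq_or_lt with rfl | ha
  · obtain rfl : c = 0 := by simpa [eq_comm] using h
    simpa using mul_nonneg hb (sq_nonneg Y)
  · have key : a * (a * X ^ 2 + b * Y ^ 2 - 2 * c * X * Y) = (a * X - c * Y) ^ 2 := by
      linear_combination Y ^ 2 * h
    have := (mul_nonneg_iff_of_pos_left ha).1 (key ▸ sq_nonneg _)
    linarith

theorem le_and_sub_mul_sub_eq_of_eq_larger_root {p q μ t : ℝ}
    (ht : t = (p + q + √((p + q) ^ 2 - 4 * (p * q - μ ^ 2))) / 2) :
    p ≤ t ∧ q ≤ t ∧ (t - p) * (t - q) = μ ^ 2 := by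
  set s := √((p + q) ^ 2 - 4 * (p * q - μ ^ 2))
  have hs : 0 ≤ s := Real.sqrt_nonneg _
  have hs2 : s ^ 2 = (p - q) ^ 2 + 4 * μ ^ 2 := by
    rw [Real.sq_sqrt (by nlinarith [sq_nonneg (p - q), sq_nonneg μ])]; ring
  refine ⟨?_, ?_, ?_⟩ <;> nlinarith [sq_nonneg μ]

section InnerProductSpace

variable {𝕜 E : Type*} [RCLike 𝕜] [NormedAddCommGroup E] [InnerProductSpace 𝕜 E]

theorem norm_smul_add_smul_sq_le (u v : E) {t : ℝ} (hu : ‖u‖ ^ 2 ≤ t) (hv : ‖v‖ ^ 2 ≤ t)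
    (h : (t - ‖u‖ ^ 2) * (t - ‖v‖ ^ 2) = ‖⟪u, v⟫_𝕜‖ ^ 2) (x y : 𝕜) :
    ‖x • u + y • v‖ ^ 2 ≤ t * (‖x‖ ^ 2 + ‖y‖ ^ 2) := by
  have hre : re ⟪x • u, y • v⟫_𝕜 ≤ ‖⟪u, v⟫_𝕜‖ * ‖x‖ * ‖y‖ := by
    refine (re_le_norm _).trans_eq ?_
    rw [inner_smul_left, inner_smul_right, norm_mul, norm_mul, norm_conj]
    ring
  have := two_mul_mul_le_of_mul_eq_sq (sub_nonneg.2 hu) (sub_nonneg.2 hv) h ‖x‖ ‖y‖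
  rw [norm_add_sq (𝕜 := 𝕜), norm_smul, norm_smul]
  nlinarith

theorem exists_norm_smul_add_smul_sq_eq (u v : E) {t : ℝ}
    (h : (t - ‖u‖ ^ 2) * (t - ‖v‖ ^ 2) = ‖⟪u, v⟫_𝕜‖ ^ 2) :
    ∃ x y : 𝕜, (x ≠ 0 ∨ y ≠ 0) ∧ ‖x • u + y • v‖ ^ 2 = t * (‖x‖ ^ 2 + ‖y‖ ^ 2) := by
  -- `(m, t - p)` is an eigenvector of the Gram matrix unless it vanishes, and then `(1, 0)` is one.
  by_cases hc : ⟪u, v⟫_𝕜 = 0 ∧ t = ‖u‖ ^ 2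
  · exact ⟨1, 0, .inl one_ne_zero, by simp [hc.2]⟩
  refine ⟨⟪u, v⟫_𝕜, ((t - ‖u‖ ^ 2 : ℝ) : 𝕜), ?_, ?_⟩
  · rw [ne_eq (ofReal _), ofReal_eq_zero, sub_eq_zero]
    tauto
  have hre : re ⟪⟪u, v⟫_𝕜 • u, ((t - ‖u‖ ^ 2 : ℝ) : 𝕜) • v⟫_𝕜 =
      (t - ‖u‖ ^ 2) * ‖⟪u, v⟫_𝕜‖ ^ 2 := by
    rw [inner_smul_left, inner_smul_right, mul_left_comm, RCLike.conj_mul, ← ofReal_pow,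
      ← ofReal_mul, ofReal_re]
  rw [norm_add_sq (𝕜 := 𝕜), norm_smul, norm_smul, hre, norm_ofReal, mul_pow, mul_pow,
    sq_abs]
  linear_combination (‖u‖ ^ 2 - t) * h

theorem EuclideanSpace.eq_smul_single_add_smul_single (x : EuclideanSpace 𝕜 (Fin 2)) :
    x = x 0 • EuclideanSpace.single 0 1 + x 1 • EuclideanSpace.single 1 1 := by
  ext i; fin_cases i <;> simp

theorem ContinuousLinearMap.sq_opNorm_euclideanSpace_fin_two
    (T : EuclideanSpace 𝕜 (Fin 2) →L[𝕜] E) {u v : E} (hu : T (EuclideanSpace.single 0 1) = u)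
    (hv : T (EuclideanSpace.single 1 1) = v) :
    ‖T‖ ^ 2 = (‖u‖ ^ 2 + ‖v‖ ^ 2 +
      √((‖u‖ ^ 2 + ‖v‖ ^ 2) ^ 2 - 4 * (‖u‖ ^ 2 * ‖v‖ ^ 2 - ‖⟪u, v⟫_𝕜‖ ^ 2))) / 2 := by
  obtain ⟨hp, hq, hpq⟩ := le_and_sub_mul_sub_eq_of_eq_larger_root (p := ‖u‖ ^ 2) (q := ‖v‖ ^ 2)
    (μ := ‖⟪u, v⟫_𝕜‖) rfl
  have hT (x : EuclideanSpace 𝕜 (Fin 2)) : T x = x 0 • u + x 1 • v := by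
    conv_lhs => rw [EuclideanSpace.eq_smul_single_add_smul_single x]
    simp only [map_add, map_smul, hu, hv]
  have hx (x : EuclideanSpace 𝕜 (Fin 2)) : ‖x‖ ^ 2 = ‖x 0‖ ^ 2 + ‖x 1‖ ^ 2 := by
    simp [EuclideanSpace.norm_sq_eq, Fin.sum_univ_two]
  obtain ⟨a, b, hab, heq⟩ := exists_norm_smul_add_smul_sq_eq u v hpq
  refine T.sq_opNorm_eq_of_le_of_eq (fun x => ?_)
    (x₀ := a • EuclideanSpace.single 0 1 + b • EuclideanSpace.single 1 1) ?_ ?_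
  · rw [hT, hx]; exact norm_smul_add_smul_sq_le u v hp hq hpq _ _
  · intro h
    rcases hab with ha | hb
    · exact ha (by simpa using congrArg (· 0) h)
    · exact hb (by simpa using congrArg (· 1) h)
  · rw [hT, hx]; simpa using heq

theorem RCLike.norm_mul_sub_mul_sq (a b c d : 𝕜) :
    ‖a * d - b * c‖ ^ 2 =
      (‖a‖ ^ 2 + ‖c‖ ^ 2) * (‖b‖ ^ 2 + ‖d‖ ^ 2) - ‖conj a * b + conj c * d‖ ^ 2 := by
  apply ofReal_injective (K := 𝕜)
  push_cast
  simp only [← mul_conj, map_add, map_sub, map_mul, conj_conj]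
  ring

theorem Matrix.sq_norm_toEuclideanCLM_fin_two (M : Matrix (Fin 2) (Fin 2) 𝕜) :
    ‖Matrix.toEuclideanCLM (𝕜 := 𝕜) (n := Fin 2) M‖ ^ 2 =
      (∑ i, ∑ j, ‖M i j‖ ^ 2 + √((∑ i, ∑ j, ‖M i j‖ ^ 2) ^ 2 - 4 * ‖M.det‖ ^ 2)) / 2 := by
  have hcol (j : Fin 2) : toEuclideanCLM (𝕜 := 𝕜) M (EuclideanSpace.single j 1) =
      WithLp.toLp 2 (fun i => M i j) := by
    ext i; simp [EuclideanSpace.single, Matrix.mulVec, dotProduct]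
  rw [ContinuousLinearMap.sq_opNorm_euclideanSpace_fin_two _ (hcol 0) (hcol 1)]
  simp only [EuclideanSpace.norm_sq_eq, PiLp.inner_apply, Fin.sum_univ_two, inner_apply]
  rw [Matrix.det_fin_two, norm_mul_sub_mul_sq, mul_comm (M 0 1), mul_comm (M 1 1)]
  ring_nf

end InnerProductSpace

/-- The distance between the minimal tripotent `!![1,0;0,0]` and a minimal tripotent
`!![α,β;γ,δ]` in `M₂(ℂ)` with the `ℓ²→ℓ²` operator norm. -/
theorem norm_sub_sq_matrix_minimal_tripotents
    (α β γ δ : ℂ)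
    (hnorm : ‖α‖ ^ 2 + ‖β‖ ^ 2 + ‖γ‖ ^ 2 + ‖δ‖ ^ 2 = 1)
    (hdet : α * δ = β * γ) :
    ‖Matrix.toEuclideanCLM (𝕜 := ℂ) (n := Fin 2) !![1, 0; 0, 0] -
        Matrix.toEuclideanCLM (𝕜 := ℂ) (n := Fin 2) !![α, β; γ, δ]‖ ^ 2 =
      (1 - α.re) + Real.sqrt ((1 - α.re) ^ 2 - ‖δ‖ ^ 2) := by
  have hsub : !![1, 0; 0, 0] - !![α, β; γ, δ] = !![1 - α, -β; -γ, -δ] := by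
    ext i j; fin_cases i <;> fin_cases j <;> simp
  have hfrob : ∑ i, ∑ j, ‖!![1 - α, -β; -γ, -δ] i j‖ ^ 2 = 2 * (1 - α.re) := by
    have h1α : ‖1 - α‖ ^ 2 = 1 - 2 * α.re + ‖α‖ ^ 2 := by
      simp only [Complex.sq_norm, Complex.normSq_apply, Complex.sub_re, Complex.sub_im,
        Complex.one_re, Complex.one_im]
      ring
    simp only [Fin.sum_univ_two, Matrix.of_apply, Matrix.cons_val', Matrix.cons_val_zero,
      Matrix.cons_val_one, Matrix.empty_val', Matrix.cons_val_fin_one, norm_neg, h1α]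
    linarith
  have hdet' : (!![1 - α, -β; -γ, -δ]).det = -δ := by
    rw [Matrix.det_fin_two_of]; linear_combination hdet
  rw [← map_sub, hsub, Matrix.sq_norm_toEuclideanCLM_fin_two, hfrob, hdet', norm_neg,
    show (2 * (1 - α.re)) ^ 2 - 4 * ‖δ‖ ^ 2 = 2 ^ 2 * ((1 - α.re) ^ 2 - ‖δ‖ ^ 2) by ring,
    Real.sqrt_mul (by norm_num), Real.sqrt_sq (by norm_num)]
  ring
end

section
/- Let H and K be complex Hilbert spaces, let ξ, ξ' ∈ H and η, η' ∈ K be unit vectors, and let u = ξ ⊠ η and v = ξ' ⊠ η' be the associated rank-one operators from H to K. Set φ := ⟪ξ', ξ⟫ · ⟪η, η'⟫ and d := ‖ξ' − ⟪ξ, ξ'⟫·ξ‖ · ‖η' − ⟪η, η'⟫·η‖. Then, in the operator norm, ‖u − v‖² = (1 − Re φ) + √( (1 − Re φ)² − d² ). -/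
/-!
Write `ξ' = a ξ + β e` with `a = ⟪ξ, ξ'⟫`, `β = ‖ξ' - a ξ‖` and `e ⟂ ξ` of norm one (or `e = 0`
when `β = 0`). Then `T = ξ ⊠ η - ξ' ⊠ η'` vanishes on `{ξ, e}ᗮ`, and by Bessel's inequality
`‖T‖ ^ 2` is the maximum of `‖T (x ξ + y e)‖ ^ 2` over `|x| ^ 2 + |y| ^ 2 = 1`. That quantity is the
Hermitian form in `(x, y)` of a `2 × 2` matrix with trace `2 (1 - Re φ)` and determinant `d ^ 2`,
whose larger eigenvalue is `(1 - Re φ) + √((1 - Re φ) ^ 2 - d ^ 2)`.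
-/

noncomputable section

/-- The rank-one operator `ξ ⊠ η : H →L[ℂ] K`, `ζ ↦ ⟪ξ, ζ⟫ • η`. -/
def rankOne {H K : Type*} [NormedAddCommGroup H] [InnerProductSpace ℂ H]
    [NormedAddCommGroup K] [InnerProductSpace ℂ K] (ξ : H) (η : K) : H →L[ℂ] K :=
  (ContinuousLinearMap.toSpanSingleton ℂ η).comp (innerSL ℂ ξ)

open ComplexConjugate
open scoped InnerProductSpace

/-- The Hermitian form of the matrix `!![A, z; conj z, B]`. -/
def hermForm₂ (A B : ℝ) (z x y : ℂ) : ℝ :=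
  A * ‖x‖ ^ 2 + B * ‖y‖ ^ 2 + 2 * (z * conj x * y).re

section HermForm₂

variable {A B μ : ℝ} {z : ℂ}

/-- The conditions say that `μ` is the larger eigenvalue of `!![A, z; conj z, B]`. -/
theorem hermForm₂_le (hA : A ≤ μ) (hB : B ≤ μ) (hμ : (μ - A) * (μ - B) = ‖z‖ ^ 2) (x y : ℂ) :
    hermForm₂ A B z x y ≤ μ * (‖x‖ ^ 2 + ‖y‖ ^ 2) := by
  have hre : (z * conj x * y).re ≤ ‖z‖ * ‖x‖ * ‖y‖ := by
    simpa [norm_mul] using Complex.re_le_norm (z * conj x * y)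
  have hamgm : 2 * ‖z‖ * ‖x‖ * ‖y‖ ≤ (μ - A) * ‖x‖ ^ 2 + (μ - B) * ‖y‖ ^ 2 := by
    rcases hA.eq_or_lt with hμA | hμA
    · rw [hμA, sub_self, zero_mul, eq_comm, sq_eq_zero_iff] at hμ
      rw [hμ, hμA]
      nlinarith [sq_nonneg ‖y‖]
    · -- `(μ - A) * (RHS - LHS) = ((μ - A) ‖x‖ - ‖z‖ ‖y‖) ^ 2`
      refine le_of_mul_le_mul_left ?_ (sub_pos.mpr hμA)
      nlinarith [sq_nonneg ((μ - A) * ‖x‖ - ‖z‖ * ‖y‖)]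
  unfold hermForm₂
  linarith

theorem exists_hermForm₂_eq (hμ : (μ - A) * (μ - B) = ‖z‖ ^ 2) :
    ∃ x y : ℂ, (x ≠ 0 ∨ y ≠ 0) ∧ hermForm₂ A B z x y = μ * (‖x‖ ^ 2 + ‖y‖ ^ 2) := by
  by_cases h : z = 0 ∧ μ = A
  · exact ⟨1, 0, .inl one_ne_zero, by simp [hermForm₂, h.2]⟩
  -- `(z, μ - A)` is an eigenvector for `μ`
  refine ⟨z, (μ - A : ℝ), ?_, ?_⟩
  · by_contra! h'
    exact h ⟨h'.1, by linarith [Complex.ofReal_eq_zero.mp h'.2]⟩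
  · have hzz : z * conj z = (‖z‖ ^ 2 : ℝ) := by
      rw [Complex.mul_conj, Complex.normSq_eq_norm_sq]
    simp only [hermForm₂, Complex.norm_real, Real.norm_eq_abs, sq_abs, hzz,
      ← Complex.ofReal_mul, Complex.ofReal_re]
    linear_combination (-(μ - A)) * hμ

end HermForm₂

section Eigenvalue

theorem norm_sq_add_norm_sq_sub_re_eq_hermForm₂ (a b x y : ℂ) (β : ℝ) :
    ‖x‖ ^ 2 + ‖conj a * x + β * y‖ ^ 2 - 2 * (conj x * (conj a * x + β * y) * b).re =
      hermForm₂ (1 + ‖a‖ ^ 2 - 2 * (conj a * b).re) (β ^ 2) (β * (a - b)) x y := by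
  simp only [hermForm₂, Complex.sq_norm, Complex.normSq_apply, Complex.mul_re, Complex.mul_im,
    Complex.add_re, Complex.add_im, Complex.sub_re, Complex.sub_im, Complex.conj_re,
    Complex.conj_im, Complex.ofReal_re, Complex.ofReal_im]
  ring

variable {a b : ℂ} {β γ : ℝ}

theorem abs_mul_le_one_sub_re_conj_mul (ha : ‖a‖ ^ 2 + β ^ 2 = 1) (hb : ‖b‖ ^ 2 + γ ^ 2 = 1) :
    |β * γ| ≤ 1 - (conj a * b).re := by
  have hre : (conj a * b).re ≤ ‖a‖ * ‖b‖ := by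
    simpa using Complex.re_le_norm (conj a * b)
  rw [abs_mul]
  nlinarith [sq_nonneg (‖a‖ * |γ| - |β| * ‖b‖), sq_abs β, sq_abs γ]

/-- The matrix of `norm_sq_add_norm_sq_sub_re_eq_hermForm₂` has trace `2c` and determinant
`(β γ) ^ 2`, so its larger eigenvalue is `c + √(c ^ 2 - (β γ) ^ 2)`. -/
theorem top_eigenvalue_spec (ha : ‖a‖ ^ 2 + β ^ 2 = 1) (hb : ‖b‖ ^ 2 + γ ^ 2 = 1) :
    let c := 1 - (conj a * b).re
    let μ := c + √(c ^ 2 - (β * γ) ^ 2)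
    let A := 1 + ‖a‖ ^ 2 - 2 * (conj a * b).re
    A ≤ μ ∧ β ^ 2 ≤ μ ∧ (μ - A) * (μ - β ^ 2) = ‖β * (a - b)‖ ^ 2 := by
  intro c μ A
  have hc := abs_mul_le_one_sub_re_conj_mul ha hb
  have hR2 : √(c ^ 2 - (β * γ) ^ 2) ^ 2 = c ^ 2 - (β * γ) ^ 2 :=
    Real.sq_sqrt (by nlinarith [abs_nonneg (β * γ), sq_abs (β * γ)])
  have hz : ‖(β : ℂ) * (a - b)‖ ^ 2 = β ^ 2 * (‖a‖ ^ 2 + ‖b‖ ^ 2 - 2 * (conj a * b).re) := by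
    simp only [Complex.sq_norm, Complex.normSq_apply, Complex.mul_re, Complex.mul_im,
      Complex.sub_re, Complex.sub_im, Complex.conj_re, Complex.conj_im, Complex.ofReal_re,
      Complex.ofReal_im]
    ring
  have hsum : (μ - A) + (μ - β ^ 2) = 2 * √(c ^ 2 - (β * γ) ^ 2) := by
    simp only [μ, A, c]
    linear_combination -ha
  have hprod : (μ - A) * (μ - β ^ 2) = ‖β * (a - b)‖ ^ 2 := by
    rw [hz]
    simp only [μ, A, c]
    linear_combination hR2 - (1 - (conj a * b).re + √(c ^ 2 - (β * γ) ^ 2)) * ha - β ^ 2 * hb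
  have hR := Real.sqrt_nonneg (c ^ 2 - (β * γ) ^ 2)
  refine ⟨?_, ?_, hprod⟩ <;> nlinarith [norm_nonneg ((β : ℂ) * (a - b))]

end Eigenvalue

section InnerProduct

variable {𝕜 H K : Type*} [RCLike 𝕜] [NormedAddCommGroup H] [InnerProductSpace 𝕜 H]
  [NormedAddCommGroup K] [InnerProductSpace 𝕜 K]

open RCLike

theorem inner_sub_inner_smul_self {u : H} (hu : ‖u‖ = 1) (w : H) :
    ⟪u, w - ⟪u, w⟫_𝕜 • u⟫_𝕜 = 0 := by
  simp [inner_sub_right, inner_smul_right, inner_self_eq_norm_sq_to_K, hu]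

theorem norm_inner_sq_add_norm_sub_sq {u : H} (hu : ‖u‖ = 1) (w : H) :
    ‖⟪u, w⟫_𝕜‖ ^ 2 + ‖w - ⟪u, w⟫_𝕜 • u‖ ^ 2 = ‖w‖ ^ 2 := by
  have h := norm_add_sq (𝕜 := 𝕜) (⟪u, w⟫_𝕜 • u) (w - ⟪u, w⟫_𝕜 • u)
  rw [inner_smul_left, inner_sub_inner_smul_self hu, mul_zero, map_zero, mul_zero, add_zero,
    add_sub_cancel, norm_smul, hu, mul_one] at h
  exact h.symm

/-- The third conjunct says `‖e‖ = 1` unless `ξ' ∈ 𝕜 ∙ ξ`, in which case `e = 0`: a unit vector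
orthogonal to `ξ` need not exist. -/
theorem exists_eq_inner_smul_add_norm_smul {ξ : H} (hξ : ‖ξ‖ = 1) (ξ' : H) :
    ∃ e : H, ⟪ξ, e⟫_𝕜 = 0 ∧ ‖e‖ ≤ 1 ∧ ‖ξ' - ⟪ξ, ξ'⟫_𝕜 • ξ‖ * ‖e‖ = ‖ξ' - ⟪ξ, ξ'⟫_𝕜 • ξ‖ ∧
      ξ' = ⟪ξ, ξ'⟫_𝕜 • ξ + (‖ξ' - ⟪ξ, ξ'⟫_𝕜 • ξ‖ : 𝕜) • e := by
  set w := ξ' - ⟪ξ, ξ'⟫_𝕜 • ξ with hw_def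
  rcases eq_or_ne w 0 with hw | hw
  · refine ⟨0, inner_zero_right _, by simp, by simp [hw], ?_⟩
    rw [smul_zero, add_zero, ← sub_eq_zero, ← hw_def, hw]
  · refine ⟨(‖w‖⁻¹ : 𝕜) • w, ?_, (norm_smul_inv_norm hw).le,
      by rw [norm_smul_inv_norm hw, mul_one], ?_⟩
    · rw [inner_smul_right, inner_sub_inner_smul_self hξ, mul_zero]
    · rw [smul_smul, mul_inv_cancel₀ (by simpa using hw), one_smul, add_sub_cancel]

theorem norm_smul_sub_smul_sq {η η' : K} (hη : ‖η‖ = 1) (hη' : ‖η'‖ = 1) (x x' : 𝕜) :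
    ‖x • η - x' • η'‖ ^ 2 = ‖x‖ ^ 2 + ‖x'‖ ^ 2 - 2 * re (conj x * x' * ⟪η, η'⟫_𝕜) := by
  rw [norm_sub_sq (𝕜 := 𝕜), inner_smul_left, inner_smul_right, norm_smul, norm_smul, hη, hη']
  ring_nf

theorem inner_smul_add_smul_of_inner_eq_zero {ξ e : H} (hξ : ‖ξ‖ = 1) (hξe : ⟪ξ, e⟫_𝕜 = 0)
    (x y : 𝕜) : ⟪ξ, x • ξ + y • e⟫_𝕜 = x := by
  rw [inner_add_right, inner_smul_right, inner_smul_right, hξe, inner_self_eq_norm_sq_to_K, hξ]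
  simp

theorem ofReal_mul_inner_smul_add_smul {ξ e : H} {β : ℝ} (hξe : ⟪ξ, e⟫_𝕜 = 0)
    (hβe : β * ‖e‖ = β) (x y : 𝕜) : (β : 𝕜) * ⟪e, x • ξ + y • e⟫_𝕜 = β * y := by
  have hβe' : (β : 𝕜) * (‖e‖ ^ 2 : ℝ) = β := by
    exact_mod_cast (by linear_combination (1 + ‖e‖) * hβe : β * ‖e‖ ^ 2 = β)
  rw [inner_add_right, inner_smul_right, inner_smul_right, ← inner_conj_symm, hξe,
    inner_self_eq_norm_sq_to_K, map_zero, mul_zero, zero_add, ← ofReal_pow, mul_left_comm, hβe', mul_comm]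

section Orthogonal

variable {ξ e : H} (hξ : ‖ξ‖ = 1) (hξe : ⟪ξ, e⟫_𝕜 = 0) (he : ‖e‖ ≤ 1)
include hξ hξe he

theorem norm_inner_sq_add_norm_inner_sq_le (ζ : H) :
    ‖⟪ξ, ζ⟫_𝕜‖ ^ 2 + ‖⟪e, ζ⟫_𝕜‖ ^ 2 ≤ ‖ζ‖ ^ 2 := by
  have heξ : ⟪e, ξ⟫_𝕜 = 0 := by rw [← inner_conj_symm, hξe, map_zero]
  have hproj : ⟪e, ζ⟫_𝕜 = ⟪e, ζ - ⟪ξ, ζ⟫_𝕜 • ξ⟫_𝕜 := by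
    rw [inner_sub_right, inner_smul_right, heξ, mul_zero, sub_zero]
  have hle : ‖⟪e, ζ⟫_𝕜‖ ≤ ‖ζ - ⟪ξ, ζ⟫_𝕜 • ξ‖ := by
    rw [hproj]
    exact (norm_inner_le_norm (𝕜 := 𝕜) _ _).trans (mul_le_of_le_one_left (norm_nonneg _) he)
  rw [← norm_inner_sq_add_norm_sub_sq (𝕜 := 𝕜) hξ ζ]
  gcongr

theorem norm_smul_add_smul_sq_le_s7 (x y : 𝕜) : ‖x • ξ + y • e‖ ^ 2 ≤ ‖x‖ ^ 2 + ‖y‖ ^ 2 := by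
  rw [norm_add_sq (𝕜 := 𝕜), inner_smul_left, inner_smul_right, hξe, mul_zero, mul_zero, map_zero,
    mul_zero, add_zero, norm_smul, norm_smul, hξ, mul_one, mul_pow]
  gcongr
  exact mul_le_of_le_one_right (by positivity) (pow_le_one₀ (norm_nonneg e) he)

theorem opNorm_sq_eq_of_eq_comp_proj {T : H →L[𝕜] K}
    (hT : ∀ ζ, T ζ = T (⟪ξ, ζ⟫_𝕜 • ξ + ⟪e, ζ⟫_𝕜 • e)) {μ : ℝ}
    (hle : ∀ x y : 𝕜, ‖T (x • ξ + y • e)‖ ^ 2 ≤ μ * (‖x‖ ^ 2 + ‖y‖ ^ 2))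
    (hwit : ∃ x y : 𝕜, (x ≠ 0 ∨ y ≠ 0) ∧ ‖T (x • ξ + y • e)‖ ^ 2 = μ * (‖x‖ ^ 2 + ‖y‖ ^ 2)) :
    ‖T‖ ^ 2 = μ := by
  obtain ⟨x, y, hxy, heq⟩ := hwit
  have hpos : 0 < ‖x‖ ^ 2 + ‖y‖ ^ 2 := by
    rcases hxy with h | h
    · have := norm_pos_iff.mpr h; positivity
    · have := norm_pos_iff.mpr h; positivity
  have hμ : 0 ≤ μ := nonneg_of_mul_nonneg_left (heq ▸ sq_nonneg _) hpos
  apply le_antisymm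
  · have hbound : ‖T‖ ≤ √μ := by
      refine T.opNorm_le_bound (Real.sqrt_nonneg μ) fun ζ ↦ ?_
      rw [← Real.sqrt_sq (norm_nonneg ζ), ← Real.sqrt_mul hμ, Real.le_sqrt (norm_nonneg _)
        (by positivity), hT]
      exact (hle _ _).trans (mul_le_mul_of_nonneg_left
        (norm_inner_sq_add_norm_inner_sq_le hξ hξe he ζ) hμ)
    calc ‖T‖ ^ 2 ≤ √μ ^ 2 := by gcongr
      _ = μ := Real.sq_sqrt hμ
  · refine le_of_mul_le_mul_right ?_ hpos
    calc μ * (‖x‖ ^ 2 + ‖y‖ ^ 2) = ‖T (x • ξ + y • e)‖ ^ 2 := heq.symm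
      _ ≤ (‖T‖ * ‖x • ξ + y • e‖) ^ 2 := by gcongr; exact T.le_opNorm _
      _ ≤ ‖T‖ ^ 2 * (‖x‖ ^ 2 + ‖y‖ ^ 2) := by
        rw [mul_pow]
        gcongr
        exact norm_smul_add_smul_sq_le_s7 hξ hξe he x y

end Orthogonal

end InnerProduct

theorem rankOne_sub_rankOne_apply {H K : Type*} [NormedAddCommGroup H] [InnerProductSpace ℂ H]
    [NormedAddCommGroup K] [InnerProductSpace ℂ K] (ξ ξ' : H) (η η' : K) (ζ : H) :
    (rankOne ξ η - rankOne ξ' η') ζ = ⟪ξ, ζ⟫_ℂ • η - ⟪ξ', ζ⟫_ℂ • η' :=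
  rfl

theorem norm_sub_sq_rankOne_general
    {H K : Type*}
    [NormedAddCommGroup H] [InnerProductSpace ℂ H]
    [NormedAddCommGroup K] [InnerProductSpace ℂ K]
    (ξ ξ' : H) (η η' : K)
    (hξ : ‖ξ‖ = 1) (hξ' : ‖ξ'‖ = 1) (hη : ‖η‖ = 1) (hη' : ‖η'‖ = 1) :
    ‖rankOne ξ η - rankOne ξ' η'‖ ^ 2 =
      (1 - ((inner ℂ ξ' ξ : ℂ) * (inner ℂ η η' : ℂ)).re) +
        Real.sqrt ((1 - ((inner ℂ ξ' ξ : ℂ) * (inner ℂ η η' : ℂ)).re) ^ 2 -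
          (‖ξ' - (inner ℂ ξ ξ' : ℂ) • ξ‖ * ‖η' - (inner ℂ η η' : ℂ) • η‖) ^ 2) := by
  obtain ⟨e, hξe, he, hβe, hξ'e⟩ := exists_eq_inner_smul_add_norm_smul (𝕜 := ℂ) hξ ξ'
  rw [RCLike.ofReal_eq_complex_ofReal] at hξ'e
  set a := ⟪ξ, ξ'⟫_ℂ
  set b := ⟪η, η'⟫_ℂ
  set β := ‖ξ' - a • ξ‖
  have ha : ‖a‖ ^ 2 + β ^ 2 = 1 := by rw [norm_inner_sq_add_norm_sub_sq hξ, hξ', one_pow]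
  have hb : ‖b‖ ^ 2 + ‖η' - b • η‖ ^ 2 = 1 := by
    rw [norm_inner_sq_add_norm_sub_sq hη, hη', one_pow]
  have hT : ∀ ζ, (rankOne ξ η - rankOne ξ' η') ζ =
      ⟪ξ, ζ⟫_ℂ • η - (conj a * ⟪ξ, ζ⟫_ℂ + β * ⟪e, ζ⟫_ℂ) • η' := fun ζ ↦ by
    rw [rankOne_sub_rankOne_apply, hξ'e, inner_add_left, inner_smul_left, inner_smul_left,
      Complex.conj_ofReal]
  have hTe : ∀ x y : ℂ, (rankOne ξ η - rankOne ξ' η') (x • ξ + y • e) =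
      x • η - (conj a * x + β * y) • η' := fun x y ↦ by
    have hβy := ofReal_mul_inner_smul_add_smul (𝕜 := ℂ) hξe hβe x y
    rw [RCLike.ofReal_eq_complex_ofReal] at hβy
    rw [hT, inner_smul_add_smul_of_inner_eq_zero hξ hξe, hβy]
  have hq : ∀ x y : ℂ, ‖(rankOne ξ η - rankOne ξ' η') (x • ξ + y • e)‖ ^ 2 =
      hermForm₂ (1 + ‖a‖ ^ 2 - 2 * (conj a * b).re) (β ^ 2) (β * (a - b)) x y := fun x y ↦ by
    rw [hTe, norm_smul_sub_smul_sq hη hη', RCLike.re_to_complex,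
      norm_sq_add_norm_sq_sub_re_eq_hermForm₂]
  rw [← inner_conj_symm ξ' ξ]
  obtain ⟨hA, hB, hμ⟩ := top_eigenvalue_spec ha hb
  refine opNorm_sq_eq_of_eq_comp_proj hξ hξe he (fun ζ ↦ by rw [hT, hTe])
    (fun x y ↦ hq x y ▸ hermForm₂_le hA hB hμ x y) ?_
  obtain ⟨x, y, hxy, h⟩ := exists_hermForm₂_eq hμ
  exact ⟨x, y, hxy, (hq x y).trans h⟩

/-- The formula for the distance between two minimal tripotents (rank-one partial isometries)
in `K(H,K)`. -/
theorem norm_sub_sq_rankOne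
    {H K : Type*}
    [NormedAddCommGroup H] [InnerProductSpace ℂ H] [CompleteSpace H]
    [NormedAddCommGroup K] [InnerProductSpace ℂ K] [CompleteSpace K]
    (ξ ξ' : H) (η η' : K)
    (hξ : ‖ξ‖ = 1) (hξ' : ‖ξ'‖ = 1) (hη : ‖η‖ = 1) (hη' : ‖η'‖ = 1) :
    ‖rankOne ξ η - rankOne ξ' η'‖ ^ 2 =
      (1 - ((inner ℂ ξ' ξ : ℂ) * (inner ℂ η η' : ℂ)).re) +
        Real.sqrt ((1 - ((inner ℂ ξ' ξ : ℂ) * (inner ℂ η η' : ℂ)).re) ^ 2 -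
          (‖ξ' - (inner ℂ ξ ξ' : ℂ) • ξ‖ * ‖η' - (inner ℂ η η' : ℂ) • η‖) ^ 2) :=
  norm_sub_sq_rankOne_general ξ ξ' η η' hξ hξ' hη hη'
end
end

section
/- Let H and K be complex Hilbert spaces, let ξ, ξ' ∈ H and η, η' ∈ K be unit vectors, and let u = ξ ⊠ η and v = ξ' ⊠ η' be the associated rank-one operators from H to K. If ‖u − v‖ = √2 and ‖u + v‖ = √2 (operator norms), then Re( ⟪ξ', ξ⟫ · ⟪η, η'⟫ ) = 0 and ‖ξ' − ⟪ξ, ξ'⟫·ξ‖ · ‖η' − ⟪η, η'⟫·η‖ = 0. -/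
noncomputable section

/-!
Write `ξ' = ⟪ξ, ξ'⟫ ξ + α e` with `e ⊥ ξ`, `‖e‖ ≤ 1` and `α = ‖ξ' - ⟪ξ, ξ'⟫ ξ‖`. Then
`ξ ⊠ η + ξ' ⊠ η' = ξ ⊠ x + e ⊠ y` with `x = η + ⟪ξ', ξ⟫ η'` and `y = α η'`, and the squared norm of
such an operator is at most the larger eigenvalue of the Gram matrix of `x, y`. Bounding that
eigenvalue by the trace gives `‖u ± v‖² ≤ 2 ± 2 Re(⟪ξ', ξ⟫⟪η, η'⟫)` (replace `η'` by `-η'` for the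
sign), so `‖u - v‖ = ‖u + v‖ = √2` forces the real part to vanish. Once it does, the eigenvalue
equals `1 + √(1 - (αβ)²)` with `β = ‖η' - ⟪η, η'⟫ η‖`, and `‖u + v‖² = 2` forces `αβ = 0`.
-/

open ComplexConjugate

local notation "⟪" x ", " y "⟫" => @inner ℂ _ _ x y

/-- The larger eigenvalue of the Hermitian matrix `[[p, z], [conj z, q]]` when `‖z‖ = r`. -/
def maxEigenvalue₂ (p q r : ℝ) : ℝ := (p + q) / 2 + √(((p - q) / 2) ^ 2 + r ^ 2)

theorem quadratic_form_le_maxEigenvalue₂ (p q r c s : ℝ) :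
    p * c ^ 2 + q * s ^ 2 + 2 * r * (c * s) ≤ maxEigenvalue₂ p q r * (c ^ 2 + s ^ 2) := by
  -- Cauchy–Schwarz in `ℝ²`, using `(c² - s²)² + (2cs)² = (c² + s²)²`.
  have hcs : (c ^ 2 - s ^ 2) * ((p - q) / 2) + 2 * c * s * r
      ≤ (c ^ 2 + s ^ 2) * √(((p - q) / 2) ^ 2 + r ^ 2) := by
    rw [← Real.sqrt_sq (by positivity : 0 ≤ c ^ 2 + s ^ 2), ← Real.sqrt_mul (by positivity)]
    refine le_trans (le_abs_self _) (Real.abs_le_sqrt ?_)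
    nlinarith [sq_nonneg ((c ^ 2 - s ^ 2) * r - 2 * c * s * ((p - q) / 2))]
  unfold maxEigenvalue₂
  linarith

theorem maxEigenvalue₂_le_add {p q r : ℝ} (hp : 0 ≤ p) (hq : 0 ≤ q) (hr : r ^ 2 ≤ p * q) :
    maxEigenvalue₂ p q r ≤ p + q := by
  have : √(((p - q) / 2) ^ 2 + r ^ 2) ≤ (p + q) / 2 :=
    (Real.sqrt_le_left (by positivity)).mpr (by nlinarith)
  unfold maxEigenvalue₂
  linarith

section InnerProductSpace

variable {H K : Type*} [NormedAddCommGroup H] [InnerProductSpace ℂ H]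
  [NormedAddCommGroup K] [InnerProductSpace ℂ K]

theorem norm_sub_inner_smul_sq {u : H} (hu : ‖u‖ = 1) (v : H) :
    ‖v - ⟪u, v⟫ • u‖ ^ 2 = ‖v‖ ^ 2 - ‖⟪u, v⟫‖ ^ 2 := by
  rw [@norm_sub_sq ℂ, inner_smul_right, norm_smul, hu, ← inner_conj_symm v u,
    Complex.mul_conj', ← Complex.ofReal_pow, RCLike.re_to_complex, Complex.ofReal_re]
  ring

theorem exists_eq_inner_smul_add_norm_smul_s8 {u : H} (hu : ‖u‖ = 1) (v : H) :
    ∃ e : H, ‖e‖ ≤ 1 ∧ ⟪u, e⟫ = 0 ∧ v = ⟪u, v⟫ • u + (‖v - ⟪u, v⟫ • u‖ : ℂ) • e := by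
  set w := v - ⟪u, v⟫ • u
  have huw : ⟪u, w⟫ = 0 := by
    rw [inner_sub_right, inner_smul_right, inner_self_eq_norm_sq_to_K, hu]
    simp
  refine ⟨(‖w‖ : ℂ)⁻¹ • w, ?_, by rw [inner_smul_right, huw, mul_zero], ?_⟩
  · rw [norm_smul, norm_inv, Complex.norm_real, norm_norm]
    exact inv_mul_le_one_of_le₀ le_rfl (norm_nonneg w)
  · rcases eq_or_ne w 0 with hw | hw
    · simp [hw, ← sub_eq_zero, w]
    · rw [smul_inv_smul₀ (by exact_mod_cast norm_ne_zero_iff.mpr hw), add_sub_cancel]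

theorem norm_inner_sq_add_norm_inner_sq_le_s8 {e₁ e₂ : H} (he₁ : ‖e₁‖ = 1) (he₂ : ‖e₂‖ ≤ 1)
    (h : ⟪e₁, e₂⟫ = 0) (ζ : H) : ‖⟪e₁, ζ⟫‖ ^ 2 + ‖⟪e₂, ζ⟫‖ ^ 2 ≤ ‖ζ‖ ^ 2 := by
  have hproj : ⟪e₂, ζ - ⟪e₁, ζ⟫ • e₁⟫ = ⟪e₂, ζ⟫ := by
    rw [inner_sub_right, inner_smul_right, inner_eq_zero_symm.mp h, mul_zero, sub_zero]
  have hle : ‖⟪e₂, ζ⟫‖ ≤ ‖ζ - ⟪e₁, ζ⟫ • e₁‖ := by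
    rw [← hproj]
    calc _ ≤ ‖e₂‖ * ‖ζ - ⟪e₁, ζ⟫ • e₁‖ := norm_inner_le_norm _ _
      _ ≤ _ := mul_le_of_le_one_left (norm_nonneg _) he₂
  have := pow_le_pow_left₀ (norm_nonneg _) hle 2
  rw [norm_sub_inner_smul_sq he₁] at this
  linarith

theorem norm_smul_add_smul_sq_le_s8 (c d : ℂ) (x y : K) :
    ‖c • x + d • y‖ ^ 2
      ≤ ‖x‖ ^ 2 * ‖c‖ ^ 2 + ‖y‖ ^ 2 * ‖d‖ ^ 2 + 2 * ‖⟪x, y⟫‖ * (‖c‖ * ‖d‖) := by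
  have hcross : (⟪c • x, d • y⟫).re ≤ ‖⟪x, y⟫‖ * (‖c‖ * ‖d‖) := by
    rw [inner_smul_left, inner_smul_right]
    refine (Complex.re_le_norm _).trans_eq ?_
    rw [norm_mul, norm_mul, Complex.norm_conj]
    ring
  rw [@norm_add_sq ℂ, norm_smul, norm_smul]
  simp only [RCLike.re_to_complex]
  nlinarith

theorem norm_add_smul_sq (x y : K) (c : ℂ) :
    ‖x + c • y‖ ^ 2 = ‖x‖ ^ 2 + 2 * (c * ⟪x, y⟫).re + ‖c‖ ^ 2 * ‖y‖ ^ 2 := by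
  rw [@norm_add_sq ℂ, inner_smul_right, norm_smul, mul_pow, RCLike.re_to_complex]

theorem rankOne_apply (ξ : H) (η : K) (ζ : H) : rankOne ξ η ζ = ⟪ξ, ζ⟫ • η := rfl

theorem rankOne_neg_right (ξ : H) (η : K) : rankOne ξ (-η) = -rankOne ξ η := by
  ext ζ
  simp [rankOne_apply]

theorem norm_rankOne_add_rankOne_sq_le {e₁ e₂ : H} (he₁ : ‖e₁‖ = 1) (he₂ : ‖e₂‖ ≤ 1)
    (h : ⟪e₁, e₂⟫ = 0) (x y : K) :
    ‖rankOne e₁ x + rankOne e₂ y‖ ^ 2 ≤ maxEigenvalue₂ (‖x‖ ^ 2) (‖y‖ ^ 2) ‖⟪x, y⟫‖ := by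
  set M := maxEigenvalue₂ (‖x‖ ^ 2) (‖y‖ ^ 2) ‖⟪x, y⟫‖
  have hM : 0 ≤ M := by unfold M maxEigenvalue₂; positivity
  suffices ‖rankOne e₁ x + rankOne e₂ y‖ ≤ √M by
    simpa [Real.sq_sqrt hM] using pow_le_pow_left₀ (norm_nonneg _) this 2
  refine ContinuousLinearMap.opNorm_le_bound _ (Real.sqrt_nonneg M) fun ζ => ?_
  rw [← Real.sqrt_sq (norm_nonneg ζ), ← Real.sqrt_mul hM,
    Real.le_sqrt (norm_nonneg _) (by positivity)]
  calc ‖rankOne e₁ x ζ + rankOne e₂ y ζ‖ ^ 2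
      ≤ ‖x‖ ^ 2 * ‖⟪e₁, ζ⟫‖ ^ 2 + ‖y‖ ^ 2 * ‖⟪e₂, ζ⟫‖ ^ 2
          + 2 * ‖⟪x, y⟫‖ * (‖⟪e₁, ζ⟫‖ * ‖⟪e₂, ζ⟫‖) := norm_smul_add_smul_sq_le_s8 _ _ x y
    _ ≤ M * (‖⟪e₁, ζ⟫‖ ^ 2 + ‖⟪e₂, ζ⟫‖ ^ 2) := quadratic_form_le_maxEigenvalue₂ _ _ _ _ _
    _ ≤ M * ‖ζ‖ ^ 2 := by gcongr; exact norm_inner_sq_add_norm_inner_sq_le_s8 he₁ he₂ h ζ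

theorem norm_rankOne_add_rankOne_sq_le_add {e₁ e₂ : H} (he₁ : ‖e₁‖ = 1) (he₂ : ‖e₂‖ ≤ 1)
    (h : ⟪e₁, e₂⟫ = 0) (x y : K) :
    ‖rankOne e₁ x + rankOne e₂ y‖ ^ 2 ≤ ‖x‖ ^ 2 + ‖y‖ ^ 2 := by
  refine (norm_rankOne_add_rankOne_sq_le he₁ he₂ h x y).trans (maxEigenvalue₂_le_add
    (by positivity) (by positivity) ?_)
  rw [← mul_pow]
  exact pow_le_pow_left₀ (norm_nonneg _) (norm_inner_le_norm x y) 2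

theorem exists_rankOne_add_rankOne_eq {ξ : H} (hξ : ‖ξ‖ = 1) (ξ' : H) (η η' : K) :
    ∃ e : H, ‖e‖ ≤ 1 ∧ ⟪ξ, e⟫ = 0 ∧ rankOne ξ η + rankOne ξ' η'
      = rankOne ξ (η + ⟪ξ', ξ⟫ • η') + rankOne e ((‖ξ' - ⟪ξ, ξ'⟫ • ξ‖ : ℂ) • η') := by
  obtain ⟨e, he, hξe, hξ'⟩ := exists_eq_inner_smul_add_norm_smul_s8 hξ ξ'
  refine ⟨e, he, hξe, ?_⟩
  ext ζ
  conv_lhs => rw [hξ']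
  simp only [add_apply, rankOne_apply, inner_add_left, inner_smul_left,
    inner_conj_symm, Complex.conj_ofReal]
  module

section UnitVectors

variable {ξ ξ' : H} {η η' : K}

theorem norm_rankOne_add_rankOne_sq_le_two_add (hξ : ‖ξ‖ = 1) (hξ' : ‖ξ'‖ = 1) (hη : ‖η‖ = 1)
    (hη' : ‖η'‖ = 1) :
    ‖rankOne ξ η + rankOne ξ' η'‖ ^ 2 ≤ 2 + 2 * (⟪ξ', ξ⟫ * ⟪η, η'⟫).re := by
  obtain ⟨e, he, hξe, hsum⟩ := exists_rankOne_add_rankOne_eq hξ ξ' η η'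
  rw [hsum]
  refine (norm_rankOne_add_rankOne_sq_le_add hξ he hξe _ _).trans_eq ?_
  rw [norm_add_smul_sq, norm_smul, Complex.norm_real, norm_norm, hη', mul_one,
    norm_sub_inner_smul_sq hξ, norm_inner_symm, hη, hξ']
  ring

theorem norm_rankOne_add_rankOne_sq_le_of_re_eq_zero (hξ : ‖ξ‖ = 1) (hξ' : ‖ξ'‖ = 1)
    (hη : ‖η‖ = 1) (hη' : ‖η'‖ = 1) (hre : (⟪ξ', ξ⟫ * ⟪η, η'⟫).re = 0) :
    ‖rankOne ξ η + rankOne ξ' η'‖ ^ 2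
      ≤ 1 + √(1 - (‖ξ' - ⟪ξ, ξ'⟫ • ξ‖ * ‖η' - ⟪η, η'⟫ • η‖) ^ 2) := by
  obtain ⟨e, he, hξe, hsum⟩ := exists_rankOne_add_rankOne_eq hξ ξ' η η'
  rw [hsum]
  refine (norm_rankOne_add_rankOne_sq_le hξ he hξe _ _).trans_eq ?_
  set α := ‖ξ' - ⟪ξ, ξ'⟫ • ξ‖
  have hα : α ^ 2 = 1 - ‖⟪ξ', ξ⟫‖ ^ 2 := by
    rw [norm_sub_inner_smul_sq hξ, hξ', norm_inner_symm]; ring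
  have hβ : ‖η' - ⟪η, η'⟫ • η‖ ^ 2 = 1 - ‖⟪η, η'⟫‖ ^ 2 := by
    rw [norm_sub_inner_smul_sq hη, hη']; ring
  have hx : ‖η + ⟪ξ', ξ⟫ • η'‖ ^ 2 = 1 + ‖⟪ξ', ξ⟫‖ ^ 2 := by
    rw [norm_add_smul_sq, hre, hη, hη']; ring
  have hy : ‖(α : ℂ) • η'‖ ^ 2 = α ^ 2 := by
    rw [norm_smul, Complex.norm_real, norm_norm, hη', mul_one]
  have hxy : ‖⟪η + ⟪ξ', ξ⟫ • η', (α : ℂ) • η'⟫‖ ^ 2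
      = α ^ 2 * (‖⟪ξ', ξ⟫‖ ^ 2 + ‖⟪η, η'⟫‖ ^ 2) := by
    have hinner : ⟪η + ⟪ξ', ξ⟫ • η', (α : ℂ) • η'⟫ = α * (⟪η, η'⟫ + conj ⟪ξ', ξ⟫) := by
      rw [inner_add_left, inner_smul_left, inner_smul_right, inner_smul_right,
        inner_self_eq_norm_sq_to_K, hη', RCLike.ofReal_one]
      ring
    rw [hinner, norm_mul, mul_pow, Complex.norm_real, norm_norm]
    congr 1
    rw [Complex.sq_norm, Complex.normSq_add, Complex.conj_conj, mul_comm ⟪η, η'⟫, hre,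
      Complex.normSq_conj, ← Complex.sq_norm, ← Complex.sq_norm]
    ring
  unfold maxEigenvalue₂
  rw [hx, hy, mul_pow, hxy, hβ, hα]
  congr 2 <;> ring

end UnitVectors

end InnerProductSpace

theorem rankOne_dist_sqrt_two_general
    {H K : Type*}
    [NormedAddCommGroup H] [InnerProductSpace ℂ H]
    [NormedAddCommGroup K] [InnerProductSpace ℂ K]
    (ξ ξ' : H) (η η' : K)
    (hξ : ‖ξ‖ = 1) (hξ' : ‖ξ'‖ = 1) (hη : ‖η‖ = 1) (hη' : ‖η'‖ = 1)
    (hsub : ‖rankOne ξ η - rankOne ξ' η'‖ = Real.sqrt 2)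
    (hadd : ‖rankOne ξ η + rankOne ξ' η'‖ = Real.sqrt 2) :
    ((inner ℂ ξ' ξ : ℂ) * (inner ℂ η η' : ℂ)).re = 0 ∧
      ‖ξ' - (inner ℂ ξ ξ' : ℂ) • ξ‖ * ‖η' - (inner ℂ η η' : ℂ) • η‖ = 0 := by
  have hre : ((inner ℂ ξ' ξ : ℂ) * (inner ℂ η η' : ℂ)).re = 0 := by
    have hplus := norm_rankOne_add_rankOne_sq_le_two_add hξ hξ' hη hη'
    have hminus := norm_rankOne_add_rankOne_sq_le_two_add hξ hξ' hη (by rwa [norm_neg])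
    rw [hadd, Real.sq_sqrt zero_le_two] at hplus
    rw [rankOne_neg_right, ← sub_eq_add_neg, hsub, Real.sq_sqrt zero_le_two, inner_neg_right,
      mul_neg, Complex.neg_re] at hminus
    linarith
  refine ⟨hre, ?_⟩
  have h := norm_rankOne_add_rankOne_sq_le_of_re_eq_zero hξ hξ' hη hη' hre
  rw [hadd, Real.sq_sqrt zero_le_two] at h
  have hprod : 1 ≤ 1 - (‖ξ' - (inner ℂ ξ ξ' : ℂ) • ξ‖ * ‖η' - (inner ℂ η η' : ℂ) • η‖) ^ 2 :=
    Real.one_le_sqrt.mp (by linarith)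
  exact pow_eq_zero_iff two_ne_zero |>.mp (le_antisymm (by linarith) (sq_nonneg _))

/-- If two rank-one partial isometries `u`, `v` satisfy `‖u - v‖ = ‖u + v‖ = √2`, then
`Re φ_u(v) = 0` and `P₀(u)(v) = 0`. -/
theorem rankOne_dist_sqrt_two
    {H K : Type*}
    [NormedAddCommGroup H] [InnerProductSpace ℂ H] [CompleteSpace H]
    [NormedAddCommGroup K] [InnerProductSpace ℂ K] [CompleteSpace K]
    (ξ ξ' : H) (η η' : K)
    (hξ : ‖ξ‖ = 1) (hξ' : ‖ξ'‖ = 1) (hη : ‖η‖ = 1) (hη' : ‖η'‖ = 1)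
    (hsub : ‖rankOne ξ η - rankOne ξ' η'‖ = Real.sqrt 2)
    (hadd : ‖rankOne ξ η + rankOne ξ' η'‖ = Real.sqrt 2) :
    ((inner ℂ ξ' ξ : ℂ) * (inner ℂ η η' : ℂ)).re = 0 ∧
      ‖ξ' - (inner ℂ ξ ξ' : ℂ) • ξ‖ * ‖η' - (inner ℂ η η' : ℂ) • η‖ = 0 :=
  rankOne_dist_sqrt_two_general ξ ξ' η η' hξ hξ' hη hη' hsub hadd
end
end

section
/- Let X be a complex Hilbert space with conjugation J and associated spin norm N. If x₁, x₂ ∈ X satisfy J(x₁) = x₁, J(x₂) = −x₂ and ⟪x₁, x₂⟫ = 0, then N(x₁ + x₂) = N(x₁) + N(x₂). -/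
noncomputable section

open scoped ComplexConjugate

/-- The spin norm associated with a conjugation `J` on a complex Hilbert space. -/
def spinNorm {X : Type*} [NormedAddCommGroup X] [InnerProductSpace ℂ X]
    (J : X → X) (x : X) : ℝ :=
  Real.sqrt (‖x‖ ^ 2 + Real.sqrt (‖x‖ ^ 4 - ‖(inner ℂ x (J x) : ℂ)‖ ^ 2))

/-!
Writing `a = ‖x₁‖`, `b = ‖x₂‖`: since `J x₁ = x₁` and `J x₂ = -x₂`, the spin norms of `x₁` and
`x₂` are `a` and `b`, while `J (x₁ + x₂) = x₁ - x₂` gives `⟪x₁ + x₂, J (x₁ + x₂)⟫ = a² - b²` by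
orthogonality. Pythagoras gives `‖x₁ + x₂‖² = a² + b²`, and
`(a² + b²)² - (a² - b²)² = (2ab)²` makes the spin norm of the sum `√((a + b)²) = a + b`.
-/

theorem Real.sqrt_sq_add_sq_add_sqrt_sq_sub {a b : ℝ} (ha : 0 ≤ a) (hb : 0 ≤ b) :
    √(a ^ 2 + b ^ 2 + √((a ^ 2 + b ^ 2) ^ 2 - (a ^ 2 - b ^ 2) ^ 2)) = a + b := by
  have hdiff : (a ^ 2 + b ^ 2) ^ 2 - (a ^ 2 - b ^ 2) ^ 2 = (2 * a * b) ^ 2 := by ring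
  rw [hdiff, Real.sqrt_sq (by positivity), show a ^ 2 + b ^ 2 + 2 * a * b = (a + b) ^ 2 by ring,
    Real.sqrt_sq (add_nonneg ha hb)]

section SpinNorm

variable {X : Type*} [NormedAddCommGroup X] [InnerProductSpace ℂ X] (J : X → X) {x : X}

theorem spinNorm_eq_norm_of_norm_inner_eq (h : ‖(inner ℂ x (J x) : ℂ)‖ = ‖x‖ ^ 2) :
    spinNorm J x = ‖x‖ := by
  rw [spinNorm, h, ← pow_mul, sub_self, Real.sqrt_zero, add_zero, Real.sqrt_sq (norm_nonneg x)]

theorem spinNorm_eq_norm_of_apply_eq_self (h : J x = x) : spinNorm J x = ‖x‖ :=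
  spinNorm_eq_norm_of_norm_inner_eq J <| by
    rw [h, inner_self_eq_norm_sq_to_K, norm_pow, RCLike.norm_ofReal, abs_norm]

theorem spinNorm_eq_norm_of_apply_eq_neg (h : J x = -x) : spinNorm J x = ‖x‖ :=
  spinNorm_eq_norm_of_norm_inner_eq J <| by
    rw [h, inner_neg_right, norm_neg, inner_self_eq_norm_sq_to_K, norm_pow, RCLike.norm_ofReal,
      abs_norm]

theorem inner_add_apply_add_of_symm_antisymm (hJadd : ∀ x y, J (x + y) = J x + J y)
    {x₁ x₂ : X} (h₁ : J x₁ = x₁) (h₂ : J x₂ = -x₂) (horth : (inner ℂ x₁ x₂ : ℂ) = 0) :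
    (inner ℂ (x₁ + x₂) (J (x₁ + x₂)) : ℂ) = ((‖x₁‖ ^ 2 - ‖x₂‖ ^ 2 : ℝ) : ℂ) := by
  have horth' : (inner ℂ x₂ x₁ : ℂ) = 0 := inner_eq_zero_symm.mp horth
  rw [hJadd, h₁, h₂, ← sub_eq_add_neg, inner_add_left, inner_sub_right, inner_sub_right, horth,
    horth', inner_self_eq_norm_sq_to_K, inner_self_eq_norm_sq_to_K, RCLike.ofReal_eq_complex_ofReal]
  push_cast
  ring

end SpinNorm

theorem spinNorm_add_of_symm_antisymm_general
    {X : Type*} [NormedAddCommGroup X] [InnerProductSpace ℂ X]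
    (J : X → X)
    (hJadd : ∀ x y, J (x + y) = J x + J y)
    (x₁ x₂ : X) (h₁ : J x₁ = x₁) (h₂ : J x₂ = -x₂)
    (horth : (inner ℂ x₁ x₂ : ℂ) = 0) :
    spinNorm J (x₁ + x₂) = spinNorm J x₁ + spinNorm J x₂ := by
  have hpyth : ‖x₁ + x₂‖ ^ 2 = ‖x₁‖ ^ 2 + ‖x₂‖ ^ 2 := by
    simpa only [← sq] using norm_add_sq_eq_norm_sq_add_norm_sq_of_inner_eq_zero x₁ x₂ horth
  rw [spinNorm_eq_norm_of_apply_eq_self J h₁, spinNorm_eq_norm_of_apply_eq_neg J h₂, spinNorm,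
    inner_add_apply_add_of_symm_antisymm J hJadd h₁ h₂ horth, Complex.norm_real, Real.norm_eq_abs,
    sq_abs, show ‖x₁ + x₂‖ ^ 4 = (‖x₁ + x₂‖ ^ 2) ^ 2 by ring, hpyth]
  exact Real.sqrt_sq_add_sq_add_sqrt_sq_sub (norm_nonneg x₁) (norm_nonneg x₂)

/-- In a spin factor, the spin norm is additive on the sum of a `J`-symmetric and a
`J`-antisymmetric element which are orthogonal for the inner product. -/
theorem spinNorm_add_of_symm_antisymm
    {X : Type*} [NormedAddCommGroup X] [InnerProductSpace ℂ X] [CompleteSpace X]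
    (J : X → X)
    (hJadd : ∀ x y, J (x + y) = J x + J y)
    (hJsmul : ∀ (c : ℂ) (x : X), J (c • x) = conj c • J x)
    (hJinv : ∀ x, J (J x) = x)
    (hJinner : ∀ x y, (inner ℂ (J x) (J y) : ℂ) = inner ℂ y x)
    (x₁ x₂ : X) (h₁ : J x₁ = x₁) (h₂ : J x₂ = -x₂)
    (horth : (inner ℂ x₁ x₂ : ℂ) = 0) :
    spinNorm J (x₁ + x₂) = spinNorm J x₁ + spinNorm J x₂ :=
  spinNorm_add_of_symm_antisymm_general J hJadd x₁ x₂ h₁ h₂ horth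
end
end

section
/- Let X be a complex Hilbert space with conjugation J and associated spin norm N. Let x₁, z₁ ∈ X satisfy J(x₁) = x₁, J(z₁) = z₁, ‖x₁‖ = ‖z₁‖ = 1 (Hilbert norm) and ⟪x₁, z₁⟫ = 0. Then for every t ∈ [0,1], N( t·x₁ + (1−t)·(i·z₁) ) = 1. -/
/-!
In the plane spanned by two orthonormal `J`-fixed vectors `u, v`, the conjugation acts on
coordinates: `J (a • u + b • v) = conj a • u + conj b • v`. Hence for `x = a • u + b • v` we get
`‖x‖² = |a|² + |b|²` and `⟪x, J x⟫ = conj (a² + b²)`, and the identity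
`(|a|² + |b|²)² - |a² + b²|² = (2 Im (a b̄))²` gives the closed form
`N x = √(|a|² + |b|² + 2 |Im (a b̄)|) = max |a + i b| |a - i b|`.
On the segment `a = t`, `b = (1 - t) i` this is `√((t + (1 - t))²) = 1`.
-/

noncomputable section

open scoped ComplexConjugate

theorem Complex.norm_sq_add_norm_sq_sq_sub_norm_add_sq_sq (a b : ℂ) :
    (‖a‖ ^ 2 + ‖b‖ ^ 2) ^ 2 - ‖a ^ 2 + b ^ 2‖ ^ 2 = (2 * (a * conj b).im) ^ 2 := by
  rw [Complex.sq_norm, Complex.sq_norm, Complex.sq_norm]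
  simp only [Complex.normSq_apply, sq, Complex.add_re, Complex.add_im, Complex.mul_re,
    Complex.mul_im, Complex.conj_re, Complex.conj_im]
  ring

theorem apply_smul_add_smul_of_fixed {X : Type*} [AddCommGroup X] [Module ℂ X] {u v : X}
    {J : X → X} (hJadd : ∀ x y, J (x + y) = J x + J y)
    (hJsmul : ∀ (c : ℂ) (x : X), J (c • x) = conj c • J x) (hJu : J u = u) (hJv : J v = v)
    (a b : ℂ) : J (a • u + b • v) = conj a • u + conj b • v := by
  rw [hJadd, hJsmul, hJsmul, hJu, hJv]

section OrthonormalPair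

variable {X : Type*} [NormedAddCommGroup X] [InnerProductSpace ℂ X] {u v : X}

theorem inner_smul_add_smul_of_orthonormal (hu : ‖u‖ = 1) (hv : ‖v‖ = 1)
    (huv : (inner ℂ u v : ℂ) = 0) (a b c d : ℂ) :
    (inner ℂ (a • u + b • v) (c • u + d • v) : ℂ) = conj a * c + conj b * d := by
  have hvu : (inner ℂ v u : ℂ) = 0 := inner_eq_zero_symm.mp huv
  simp only [inner_add_left, inner_add_right, inner_smul_left, inner_smul_right,
    inner_self_eq_norm_sq_to_K, hu, hv, huv, hvu]
  simp [mul_comm]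

theorem norm_sq_smul_add_smul_of_orthonormal (hu : ‖u‖ = 1) (hv : ‖v‖ = 1)
    (huv : (inner ℂ u v : ℂ) = 0) (a b : ℂ) :
    ‖a • u + b • v‖ ^ 2 = ‖a‖ ^ 2 + ‖b‖ ^ 2 := by
  rw [@norm_sq_eq_re_inner ℂ, inner_smul_add_smul_of_orthonormal hu hv huv,
    Complex.conj_mul', Complex.conj_mul']
  norm_cast

theorem spinNorm_smul_add_smul_of_orthonormal {J : X → X}
    (hJadd : ∀ x y, J (x + y) = J x + J y)
    (hJsmul : ∀ (c : ℂ) (x : X), J (c • x) = conj c • J x) (hJu : J u = u) (hJv : J v = v)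
    (hu : ‖u‖ = 1) (hv : ‖v‖ = 1) (huv : (inner ℂ u v : ℂ) = 0) (a b : ℂ) :
    spinNorm J (a • u + b • v) = √(‖a‖ ^ 2 + ‖b‖ ^ 2 + 2 * |(a * conj b).im|) := by
  have hnorm : ‖(inner ℂ (a • u + b • v) (J (a • u + b • v)) : ℂ)‖ = ‖a ^ 2 + b ^ 2‖ := by
    rw [apply_smul_add_smul_of_fixed hJadd hJsmul hJu hJv,
      inner_smul_add_smul_of_orthonormal hu hv huv, ← sq, ← sq, ← map_pow, ← map_pow, ← map_add,
      Complex.norm_conj]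
  have h4 : ‖a • u + b • v‖ ^ 4 = (‖a‖ ^ 2 + ‖b‖ ^ 2) ^ 2 := by
    rw [← norm_sq_smul_add_smul_of_orthonormal hu hv huv]
    ring
  rw [spinNorm, hnorm, h4, Complex.norm_sq_add_norm_sq_sq_sub_norm_add_sq_sq,
    norm_sq_smul_add_smul_of_orthonormal hu hv huv, Real.sqrt_sq_eq_abs, abs_mul, abs_two]

end OrthonormalPair

theorem spinNorm_segment_eq_one_general
    {X : Type*} [NormedAddCommGroup X] [InnerProductSpace ℂ X]
    (J : X → X)
    (hJadd : ∀ x y, J (x + y) = J x + J y)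
    (hJsmul : ∀ (c : ℂ) (x : X), J (c • x) = conj c • J x)
    (x₁ z₁ : X) (h₁ : J x₁ = x₁) (h₂ : J z₁ = z₁)
    (hx₁ : ‖x₁‖ = 1) (hz₁ : ‖z₁‖ = 1)
    (horth : (inner ℂ x₁ z₁ : ℂ) = 0)
    (t : ℝ) (ht : t ∈ Set.Icc (0 : ℝ) 1) :
    spinNorm J ((t : ℂ) • x₁ + ((1 - t : ℝ) : ℂ) • (Complex.I • z₁)) = 1 := by
  obtain ⟨ht0, ht1⟩ := ht
  rw [smul_smul, spinNorm_smul_add_smul_of_orthonormal hJadd hJsmul h₁ h₂ hx₁ hz₁ horth]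
  have him : ((t : ℂ) * conj (((1 - t : ℝ) : ℂ) * Complex.I)).im = -(t * (1 - t)) := by
    simp
  rw [him, abs_neg, abs_of_nonneg (by nlinarith), norm_mul, Complex.norm_I, mul_one,
    Complex.norm_real, Complex.norm_real, Real.norm_eq_abs, Real.norm_eq_abs, sq_abs, sq_abs]
  convert Real.sqrt_one using 2
  ring

/-- The segment between `x₁` and `i z₁`, for `x₁, z₁` orthonormal `J`-symmetric elements of a
spin factor, lies entirely in the unit sphere for the spin norm. -/
theorem spinNorm_segment_eq_one
    {X : Type*} [NormedAddCommGroup X] [InnerProductSpace ℂ X] [CompleteSpace X]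
    (J : X → X)
    (hJadd : ∀ x y, J (x + y) = J x + J y)
    (hJsmul : ∀ (c : ℂ) (x : X), J (c • x) = conj c • J x)
    (hJinv : ∀ x, J (J x) = x)
    (hJinner : ∀ x y, (inner ℂ (J x) (J y) : ℂ) = inner ℂ y x)
    (x₁ z₁ : X) (h₁ : J x₁ = x₁) (h₂ : J z₁ = z₁)
    (hx₁ : ‖x₁‖ = 1) (hz₁ : ‖z₁‖ = 1)
    (horth : (inner ℂ x₁ z₁ : ℂ) = 0)
    (t : ℝ) (ht : t ∈ Set.Icc (0 : ℝ) 1) :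
    spinNorm J ((t : ℂ) • x₁ + ((1 - t : ℝ) : ℂ) • (Complex.I • z₁)) = 1 :=
  spinNorm_segment_eq_one_general J hJadd hJsmul x₁ z₁ h₁ h₂ hx₁ hz₁ horth t ht
end
end

section
/- Let a, a' ∈ ℝ with |a| ≤ 1 and |a'| ≤ 1, and let d, d' ∈ ℝ with 0 ≤ d ≤ 1 − |a| and 0 ≤ d' ≤ 1 − |a'|. If (1 − a) + √((1 − a)² − d²) = (1 − a') + √((1 − a')² − d'²) and (1 + a) + √((1 + a)² − d²) = (1 + a') + √((1 + a')² − d'²), then a = a' and d = d'. -/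
lemma sqrt_key (x d : ℝ) (hd : 0 ≤ d) (hx : d ≤ x) :
    (x + Real.sqrt (x ^ 2 - d ^ 2)) * (2 * x - (x + Real.sqrt (x ^ 2 - d ^ 2))) = d ^ 2 := by
  have h : (0:ℝ) ≤ x ^ 2 - d ^ 2 := by nlinarith
  have h2 := Real.sq_sqrt h
  nlinarith [Real.sqrt_nonneg (x ^ 2 - d ^ 2)]

/-- Uniqueness of the solution of the system of equations appearing in the proof of the
additivity of a surjective sphere-isometry on quadrangles and trangles. -/
theorem sqrt_system_unique_solution
    (a a' d d' : ℝ) (ha : |a| ≤ 1) (ha' : |a'| ≤ 1)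
    (hd0 : 0 ≤ d) (hd : d ≤ 1 - |a|)
    (hd'0 : 0 ≤ d') (hd' : d' ≤ 1 - |a'|)
    (h1 : (1 - a) + Real.sqrt ((1 - a) ^ 2 - d ^ 2) =
      (1 - a') + Real.sqrt ((1 - a') ^ 2 - d' ^ 2))
    (h2 : (1 + a) + Real.sqrt ((1 + a) ^ 2 - d ^ 2) =
      (1 + a') + Real.sqrt ((1 + a') ^ 2 - d' ^ 2)) :
    a = a' ∧ d = d' := by
  have haa := abs_le.1 ha
  have haa' := abs_le.1 ha'
  have hda : d ≤ 1 - a := le_trans hd (by linarith [le_abs_self a])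
  have hdb : d ≤ 1 + a := le_trans hd (by linarith [neg_abs_le a])
  have hda' : d' ≤ 1 - a' := le_trans hd' (by linarith [le_abs_self a'])
  have hdb' : d' ≤ 1 + a' := le_trans hd' (by linarith [neg_abs_le a'])
  have A := sqrt_key (1 - a) d hd0 hda
  have B := sqrt_key (1 + a) d hd0 hdb
  have A' := sqrt_key (1 - a') d' hd'0 hda'
  have B' := sqrt_key (1 + a') d' hd'0 hdb'
  rw [h1] at A
  rw [h2] at B
  set s1 := (1 - a') + Real.sqrt ((1 - a') ^ 2 - d' ^ 2) with hs1
  set s2 := (1 + a') + Real.sqrt ((1 + a') ^ 2 - d' ^ 2) with hs2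
  have hs1pos : 1 - a' ≤ s1 := by
    have := Real.sqrt_nonneg ((1 - a') ^ 2 - d' ^ 2); linarith
  have hs2pos : 1 + a' ≤ s2 := by
    have := Real.sqrt_nonneg ((1 + a') ^ 2 - d' ^ 2); linarith
  clear hs1 hs2 h1 h2 hd hd' ha ha'
  clear_value s1 s2
  have e1 : d ^ 2 - d' ^ 2 = 2 * s1 * (a' - a) := by linear_combination A' - A
  have e2 : d ^ 2 - d' ^ 2 = 2 * s2 * (a - a') := by linear_combination B' - B
  have hsum : (2:ℝ) ≤ s1 + s2 := by linarith
  have haeq : a = a' := by nlinarith [e1, e2, hsum]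
  have hdeq : d = d' := by
    have h' : d ^ 2 = d' ^ 2 := by rw [haeq] at e1; linarith
    nlinarith [h', hd0, hd'0]
  exact ⟨haeq, hdeq⟩
end
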